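/- Consider the CTRS R with unconditional rules 0 ≤ x → true, s(x) ≤ s(y) → x ≤ y, s(x) > 0 → true, s(x) > s(y) → x > y, x − 0 → x, 0 − x → 0, s(x) − s(y) → x − y, and conditional rules x ÷ y → ⟨0,y⟩ ⇐ y > x → true and x ÷ y → ⟨s(q),r⟩ ⇐ y ≤ x → true, (x−y) ÷ x → ⟨y,z⟩, under the reachability semantics. Then the condition of its conditional critical pair is infeasible: there is no substitution σ (equivalently, no ground terms w, x, y, z) such that σ(x ≤ w) →*_R true, σ((w−x) ÷ x) →*_R σ(⟨y,z⟩), and σ(x > w) →*_R true all hold. -/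

import Mathlib

/-- Terms over the signature with constants `0` (`zero`) and `true` (`tt`), unary
symbol `s`, and binary symbols `≤` (`le`), `>` (`gt`), `−` (`sub`), `÷` (`dvd`)
and pairing `⟨·,·⟩` (`pair`). -/
inductive Tm where
  | zero | tt
  | s (t : Tm)
  | le (t₁ t₂ : Tm) | gt (t₁ t₂ : Tm) | sub (t₁ t₂ : Tm) | dvd (t₁ t₂ : Tm)
  | pair (t₁ t₂ : Tm)

mutual
  /-- The one-step rewrite relation of the CTRS under the reachability semantics:
  rule instances (whose conditions hold w.r.t. `Rews`) closed under contexts. -/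
  inductive Rew : Tm → Tm → Prop where
    -- 0 ≤ x → true
    | le_zero (x : Tm) : Rew (.le .zero x) .tt
    -- s(x) ≤ s(y) → x ≤ y
    | le_s (x y : Tm) : Rew (.le (.s x) (.s y)) (.le x y)
    -- s(x) > 0 → true
    | gt_zero (x : Tm) : Rew (.gt (.s x) .zero) .tt
    -- s(x) > s(y) → x > y
    | gt_s (x y : Tm) : Rew (.gt (.s x) (.s y)) (.gt x y)
    -- x − 0 → x
    | sub_zero (x : Tm) : Rew (.sub x .zero) x
    -- 0 − x → 0
    | zero_sub (x : Tm) : Rew (.sub .zero x) .zero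
    -- s(x) − s(y) → x − y
    | sub_s (x y : Tm) : Rew (.sub (.s x) (.s y)) (.sub x y)
    -- x ÷ y → ⟨0,y⟩ ⇐ y > x → true
    | div1 (x y : Tm) : Rews (.gt y x) .tt → Rew (.dvd x y) (.pair .zero y)
    -- x ÷ y → ⟨s(q),r⟩ ⇐ y ≤ x → true, (x−y) ÷ x → ⟨y,z⟩
    | div2 (x y q r z : Tm) : Rews (.le y x) .tt →
        Rews (.dvd (.sub x y) x) (.pair y z) → Rew (.dvd x y) (.pair (.s q) r)
    -- closure under contexts
    | s_congr {t t'} : Rew t t' → Rew (.s t) (.s t')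
    | le_congr_l {t t'} (u : Tm) : Rew t t' → Rew (.le t u) (.le t' u)
    | le_congr_r (u : Tm) {t t'} : Rew t t' → Rew (.le u t) (.le u t')
    | gt_congr_l {t t'} (u : Tm) : Rew t t' → Rew (.gt t u) (.gt t' u)
    | gt_congr_r (u : Tm) {t t'} : Rew t t' → Rew (.gt u t) (.gt u t')
    | sub_congr_l {t t'} (u : Tm) : Rew t t' → Rew (.sub t u) (.sub t' u)
    | sub_congr_r (u : Tm) {t t'} : Rew t t' → Rew (.sub u t) (.sub u t')
    | dvd_congr_l {t t'} (u : Tm) : Rew t t' → Rew (.dvd t u) (.dvd t' u)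
    | dvd_congr_r (u : Tm) {t t'} : Rew t t' → Rew (.dvd u t) (.dvd u t')
    | pair_congr_l {t t'} (u : Tm) : Rew t t' → Rew (.pair t u) (.pair t' u)
    | pair_congr_r (u : Tm) {t t'} : Rew t t' → Rew (.pair u t) (.pair u t')

  /-- The many-step rewrite relation: reflexive and closed under prepending
  one-step rewrites. -/
  inductive Rews : Tm → Tm → Prop where
    | refl (t : Tm) : Rews t t
    | step {s u t : Tm} : Rew s u → Rews u t → Rews s t
end

/-!
Interpret terms in `ℕ`: numerals by their value, `−` as truncated subtraction, `true` as `1`,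
the comparisons as their truth values `1`/`0`, and both `÷` and pairing as `0`. Every rule,
conditional or not, holds in this model, so rewriting preserves the value. Hence
`x ≤ w →* true` forces `x ≤ w` and `x > w →* true` forces `x > w` in `ℕ`, which is absurd.
-/

def Tm.eval : Tm → ℕ
  | .zero => 0
  | .tt => 1
  | .s t => t.eval + 1
  | .le a b => if a.eval ≤ b.eval then 1 else 0
  | .gt a b => if b.eval < a.eval then 1 else 0
  | .sub a b => a.eval - b.eval
  | .dvd _ _ => 0
  | .pair _ _ => 0

theorem Rews.eval_eq {a b : Tm} (h : Rews a b) : a.eval = b.eval := by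
  induction h using Rews.rec (motive_1 := fun a b _ => a.eval = b.eval) with
  | refl => rfl
  | step _ _ ih₁ ih₂ => exact ih₁.trans ih₂
  | _ => simp_all [Tm.eval]

/-- The condition of the conditional critical pair
`⟨0,x⟩ ↓ ⟨s(y),z⟩ ⇐ x ≤ w → true, (w−x) ÷ x → ⟨y,z⟩, x > w → true`
is infeasible: no (ground) terms `w`, `x`, `y`, `z` satisfy all three reachability
conditions. -/
theorem ccp_infeasible :
    ¬ ∃ w x y z : Tm, Rews (.le x w) .tt ∧
      Rews (.dvd (.sub w x) x) (.pair y z) ∧ Rews (.gt x w) .tt := by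
  rintro ⟨w, x, -, -, hle, -, hgt⟩
  have hxw : x.eval ≤ w.eval := by simpa [Tm.eval] using hle.eval_eq
  have hwx : w.eval < x.eval := by simpa [Tm.eval] using hgt.eval_eq
  omega
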